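/- arXiv:2506.21254 — 4 statements merged into one kernel-verified Lean document; each statement's English description precedes it below -/
import Mathlib

section
/- Let G be a finite simple graph and let W be an irregularising walk of G in which every edge of G is traversed at most k times. Then G admits a proper labelling with all labels in {1,…,k+1}; in particular χ'_s(G) ≤ k+1, so for nice G one has χ'_s(G) ≤ ME^W(G) + 1. -/
open SimpleGraph Finset

variable {V : Type*}

/-- `W.inc u` is the number of edge-traversals of the walk `W` incident to `u`. -/
def SimpleGraph.Walk.inc [DecidableEq V] {G : SimpleGraph V} {a b : V}
    (W : G.Walk a b) (u : V) : ℕ :=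
  (W.edges.filter (fun e => u ∈ e)).length

/-- A walk `W` of `G` is irregularising if in the multigraph `G + W` no two
adjacent vertices have the same degree. -/
def SimpleGraph.Walk.Irregularising [Fintype V] [DecidableEq V] {G : SimpleGraph V}
    [DecidableRel G.Adj] {a b : V} (W : G.Walk a b) : Prop :=
  ∀ ⦃u v : V⦄, G.Adj u v → G.degree u + W.inc u ≠ G.degree v + W.inc v

/-- The vertex sum `σ_ℓ(u)` of a labelling. -/
def vertexSum [Fintype V] [DecidableEq V] (G : SimpleGraph V) [DecidableRel G.Adj]
    (ℓ : Sym2 V → ℕ) (u : V) : ℕ :=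
  ∑ w ∈ G.neighborFinset u, ℓ s(u, w)

/-- A labelling is proper if adjacent vertices get distinct sums. -/
def IsProperLabelling [Fintype V] [DecidableEq V] (G : SimpleGraph V) [DecidableRel G.Adj]
    (ℓ : Sym2 V → ℕ) : Prop :=
  ∀ ⦃u v : V⦄, G.Adj u v → vertexSum G ℓ u ≠ vertexSum G ℓ v

/-- Minimum length of an irregularising walk, as an extended natural number. -/
noncomputable def MLW [Fintype V] [DecidableEq V] (G : SimpleGraph V) [DecidableRel G.Adj] : ℕ∞ :=
  ⨅ (a : V) (b : V) (W : G.Walk a b) (_ : W.Irregularising), (W.length : ℕ∞)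

/-- Infimum over irregularising walks of the maximum number of traversals of a single edge. -/
noncomputable def MEW [Fintype V] [DecidableEq V] (G : SimpleGraph V) [DecidableRel G.Adj] : ℕ∞ :=
  ⨅ (a : V) (b : V) (W : G.Walk a b) (_ : W.Irregularising),
    ((W.edges.toFinset.sup fun e => W.edges.count e : ℕ) : ℕ∞)

/-- Infimum over irregularising walks of `max_u inc_W(u)`. -/
noncomputable def MVW [Fintype V] [DecidableEq V] (G : SimpleGraph V) [DecidableRel G.Adj] : ℕ∞ :=
  ⨅ (a : V) (b : V) (W : G.Walk a b) (_ : W.Irregularising),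
    ((Finset.univ.sup fun u => W.inc u : ℕ) : ℕ∞)

/-! Label each edge with one more than the number of times `W` traverses it. The label sum at `u`
is then `d_G(u) + inc_W(u)`, the degree of `u` in `G + W`, so the labelling is proper exactly
because `W` is irregularising. -/

namespace SimpleGraph

variable [DecidableEq V] (G : SimpleGraph V)

theorem image_neighborFinset_mk (u : V) [Fintype (G.neighborSet u)] :
    (G.neighborFinset u).image (s(u, ·)) = G.incidenceFinset u := by
  ext e
  induction e using Sym2.ind with
  | h x y =>
    simp only [mem_image, mem_neighborFinset, Sym2.eq_iff, mem_incidenceFinset, incidenceSet,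
      Set.mem_ofPred_eq, mem_edgeSet, Sym2.mem_iff]
    constructor
    · rintro ⟨w, huw, ⟨rfl, rfl⟩ | ⟨rfl, rfl⟩⟩
      exacts [⟨huw, .inl rfl⟩, ⟨huw.symm, .inr rfl⟩]
    · rintro ⟨hxy, rfl | rfl⟩
      exacts [⟨y, hxy, .inl ⟨rfl, rfl⟩⟩, ⟨x, hxy.symm, .inr ⟨rfl, rfl⟩⟩]

theorem sum_neighborFinset_count_eq_length_filter (u : V) [Fintype (G.neighborSet u)]
    {l : List (Sym2 V)} (hl : ∀ e ∈ l, e ∈ G.edgeSet) :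
    ∑ w ∈ G.neighborFinset u, l.count s(u, w) = (l.filter (u ∈ ·)).length := by
  calc ∑ w ∈ G.neighborFinset u, l.count s(u, w)
      = ∑ e ∈ G.incidenceFinset u, l.count e := by
        rw [← image_neighborFinset_mk, Finset.sum_image]
        exact fun x _ y _ h => Sym2.congr_right.mp h
    _ = ∑ e ∈ G.incidenceFinset u, (l.filter (u ∈ ·)).count e := by
        refine Finset.sum_congr rfl fun e he => ?_
        rw [List.count_filter]
        exact decide_eq_true ((G.mem_incidenceFinset u e).mp he).2
    _ = (l.filter (u ∈ ·)).length := by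
        have hsub : ∀ e ∈ (l.filter (u ∈ ·) : Multiset (Sym2 V)), e ∈ G.incidenceFinset u :=
            fun e he => by
          obtain ⟨hel, hue⟩ := List.mem_filter.mp (Multiset.mem_coe.mp he)
          exact (G.mem_incidenceFinset u e).mpr ⟨hl e hel, of_decide_eq_true hue⟩
        simpa using Multiset.sum_count_eq_card hsub

end SimpleGraph

section Labelling

variable [Fintype V] [DecidableEq V] {G : SimpleGraph V} [DecidableRel G.Adj]

theorem vertexSum_add_one (ℓ : Sym2 V → ℕ) (u : V) :
    vertexSum G (fun e => ℓ e + 1) u = vertexSum G ℓ u + G.degree u := by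
  rw [vertexSum, Finset.sum_add_distrib, Finset.sum_const, smul_eq_mul, mul_one,
    card_neighborFinset_eq_degree, vertexSum]

theorem SimpleGraph.Walk.vertexSum_count_edges {a b : V} (W : G.Walk a b) (u : V) :
    vertexSum G (W.edges.count ·) u = W.inc u :=
  G.sum_neighborFinset_count_eq_length_filter u fun _ he => W.edges_subset_edgeSet he

end Labelling

/-- If `W` is an irregularising walk of `G` traversing every edge at most
`k` times, then `G` admits a proper labelling with all labels in `{1, …, k+1}`. -/
theorem stmt_1 {V : Type*} [Fintype V] [DecidableEq V] (G : SimpleGraph V)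
    [DecidableRel G.Adj] {a b : V} (W : G.Walk a b) (hW : W.Irregularising)
    (k : ℕ) (hk : ∀ e : Sym2 V, W.edges.count e ≤ k) :
    ∃ ℓ : Sym2 V → ℕ, (∀ e ∈ G.edgeSet, 1 ≤ ℓ e ∧ ℓ e ≤ k + 1) ∧ IsProperLabelling G ℓ := by
  refine ⟨fun e => W.edges.count e + 1,
    fun e _ => ⟨Nat.le_add_left _ _, Nat.add_le_add_right (hk e) 1⟩, ?_⟩
  have hsum : ∀ u, vertexSum G (fun e => W.edges.count e + 1) u = G.degree u + W.inc u := by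
    intro u
    rw [vertexSum_add_one, W.vertexSum_count_edges, add_comm]
  intro u v huv h
  rw [hsum, hsum] at h
  exact hW huv h
end

section
/- Let G be a finite simple graph with maximum degree Δ, and let W be an irregularising walk of G such that inc_W(u) ≤ k for every vertex u. Then G admits a proper labelling ℓ with σ_ℓ(u) ≤ k + Δ for every vertex u. (Consequently, for nice G the minimum over proper labellings of the maximum vertex sum is at most MV^W(G) + Δ.) -/
open SimpleGraph Finset

variable {V : Type*}

/-! Label every edge by one more than the number of times `W` traverses it. The sum at `u` is
then `deg u + inc_W u`, i.e. the degree of `u` in `G + W`, so the labelling is proper exactly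
because `W` is irregularising, and the sum is at most `Δ + k`. -/

namespace SimpleGraph

variable [DecidableEq V] (G : SimpleGraph V)

lemma sum_neighborFinset_ite_eq_mk {u : V} [Fintype (G.neighborSet u)] {e : Sym2 V}
    (he : e ∈ G.edgeSet) :
    (∑ w ∈ G.neighborFinset u, if e = s(u, w) then 1 else 0) = if u ∈ e then 1 else 0 := by
  split_ifs with hu
  · obtain ⟨w, rfl⟩ := Sym2.mem_iff_exists.mp hu
    rw [sum_congr rfl fun x _ => if_congr Sym2.congr_right rfl rfl, sum_ite_eq, if_pos]
    simpa using he
  · refine sum_eq_zero fun w _ => if_neg ?_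
    rintro rfl
    exact hu (Sym2.mem_mk_left u w)

lemma countP_mem_eq_sum_count {u : V} [Fintype (G.neighborSet u)] {l : List (Sym2 V)}
    (hl : ∀ e ∈ l, e ∈ G.edgeSet) :
    l.countP (u ∈ ·) = ∑ w ∈ G.neighborFinset u, l.count s(u, w) := by
  induction l with
  | nil => simp
  | cons e l ih =>
    simp only [List.forall_mem_cons] at hl
    simp only [List.countP_cons, List.count_cons, sum_add_distrib, ← ih hl.2, beq_iff_eq,
      G.sum_neighborFinset_ite_eq_mk hl.1, decide_eq_true_eq]

namespace Walk

variable {G} {a b : V}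

lemma inc_eq_sum_count (W : G.Walk a b) (u : V) [Fintype (G.neighborSet u)] :
    W.inc u = ∑ w ∈ G.neighborFinset u, W.edges.count s(u, w) := by
  rw [inc, ← List.countP_eq_length_filter]
  exact G.countP_mem_eq_sum_count fun _ he => W.edges_subset_edgeSet he

def traversalLabelling (W : G.Walk a b) (e : Sym2 V) : ℕ := 1 + W.edges.count e

lemma vertexSum_traversalLabelling [Fintype V] [DecidableRel G.Adj] (W : G.Walk a b) (u : V) :
    vertexSum G W.traversalLabelling u = G.degree u + W.inc u := by
  simp only [vertexSum, traversalLabelling, sum_add_distrib, sum_const, smul_eq_mul, mul_one,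
    card_neighborFinset_eq_degree, W.inc_eq_sum_count]

end Walk
end SimpleGraph

/-- If `W` is an irregularising walk of `G` with `inc_W(u) ≤ k` for every
vertex `u`, then `G` admits a proper labelling `ℓ` with `σ_ℓ(u) ≤ k + Δ` for every
vertex `u`, where `Δ` is the maximum degree of `G`. -/
theorem stmt_2 {V : Type*} [Fintype V] [DecidableEq V] (G : SimpleGraph V)
    [DecidableRel G.Adj] {a b : V} (W : G.Walk a b) (hW : W.Irregularising)
    (k : ℕ) (hk : ∀ u : V, W.inc u ≤ k) :
    ∃ ℓ : Sym2 V → ℕ, (∀ e ∈ G.edgeSet, 1 ≤ ℓ e) ∧ IsProperLabelling G ℓ ∧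
      ∀ u : V, vertexSum G ℓ u ≤ k + G.maxDegree := by
  refine ⟨W.traversalLabelling, fun e _ => Nat.le_add_right 1 _, fun u v huv => ?_, fun u => ?_⟩
  · simpa only [Walk.vertexSum_traversalLabelling] using hW huv
  · rw [Walk.vertexSum_traversalLabelling, add_comm k]
    exact add_le_add (G.degree_le_maxDegree u) (hk u)
end

section
/- Let G be a connected finite simple graph not isomorphic to K₂, with n vertices and m edges. Then G admits an irregularising walk of length at most 2(m + n − 1); in particular, since m ≥ n − 1, G admits an irregularising walk of length at most 4m, i.e., ML^W(G) ≤ 4m. -/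
open SimpleGraph Finset

variable {V : Type*}

/-! Root a shortest-path tree at `r`, with parent map `p`, and let a closed walk go back and
forth `c v ≥ 1` times along each tree edge `v (p v)`, so that `inc u = 2 c u + 2 ∑_{p v = u} c v`.
Choosing the `c v` greedily by non-increasing distance from `r` fixes the final degree of `v` in
`G + W` at the moment `c v` is chosen, and some `c v ≤ 1 + #(neighbours already fixed)` avoids all
of them. Only the last vertex `a` (a child of `r`) and `r` itself are fixed simultaneously, by the
same amount; their difference is made nonzero at the second-to-last step at the cost of one extra
unit, and `c a` also pays for the neighbours of `r`. Each edge is thus paid for at most once, up to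
that one unit, so `∑ c ≤ (n - 1) + m` and the walk has length `2 ∑ c ≤ 2 (m + n - 1)`. -/

lemma Nat.exists_pos_le_card_succ_notMem (X : Finset ℕ) : ∃ x, 0 < x ∧ x ≤ #X + 1 ∧ x ∉ X := by
  obtain ⟨x, hx, hxX⟩ := Finset.exists_mem_notMem_of_card_lt_card
    (s := X) (t := Finset.Icc 1 (#X + 1)) (by simp)
  obtain ⟨h1, h2⟩ := Finset.mem_Icc.mp hx
  exact ⟨x, h1, h2, hxX⟩

lemma Nat.add_two_mul_notMem_of_notMem_image {D x : ℕ} {T : Finset ℕ}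
    (hx : x ∉ T.image fun y => (y - D) / 2) : D + 2 * x ∉ T :=
  fun hT => hx (Finset.mem_image.mpr ⟨D + 2 * x, hT, by omega⟩)

namespace SimpleGraph.Walk

variable {G : SimpleGraph V}

def bounce {a b : V} (h : G.Adj a b) : ℕ → G.Walk a a
  | 0 => nil
  | k + 1 => cons h (cons h.symm (bounce h k))

@[simp]
lemma length_bounce {a b : V} (h : G.Adj a b) (k : ℕ) : (bounce h k).length = 2 * k := by
  induction k with
  | zero => rfl
  | succ k ih => simp only [bounce, length_cons, ih]; ring

lemma mem_support_bounce {a b : V} (h : G.Adj a b) {k : ℕ} (hk : 0 < k) :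
    b ∈ (bounce h k).support := by
  obtain ⟨k, rfl⟩ := Nat.exists_eq_add_of_lt hk
  simp [bounce]

variable [DecidableEq V]

@[simp]
lemma inc_nil {a : V} (u : V) : (nil : G.Walk a a).inc u = 0 := rfl

@[simp]
lemma inc_cons {a b c : V} (h : G.Adj a b) (W : G.Walk b c) (u : V) :
    (cons h W).inc u = (if u = a ∨ u = b then 1 else 0) + W.inc u := by
  by_cases hu : u = a ∨ u = b <;> simp [inc, hu, Nat.add_comm]

@[simp]
lemma inc_append {a b c : V} (W : G.Walk a b) (W' : G.Walk b c) (u : V) :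
    (W.append W').inc u = W.inc u + W'.inc u := by
  simp [inc, edges_append, List.filter_append]

lemma inc_bounce {a b : V} (h : G.Adj a b) (k : ℕ) (u : V) :
    (bounce h k).inc u = (if u = a then 2 * k else 0) + (if u = b then 2 * k else 0) := by
  induction k with
  | zero => simp [bounce]
  | succ k ih =>
    have := h.ne
    simp only [bounce, inc_cons, ih]
    split_ifs <;> simp_all <;> omega

def splice {r u : V} (W : G.Walk r r) (hu : u ∈ W.support) (X : G.Walk u u) : G.Walk r r :=
  ((W.takeUntil u hu).append X).append (W.dropUntil u hu)

variable {r u : V} (W : G.Walk r r) (hu : u ∈ W.support) (X : G.Walk u u)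

lemma inc_splice (w : V) : (W.splice hu X).inc w = W.inc w + X.inc w := by
  conv_rhs => rw [← W.take_spec hu]
  simp only [splice, inc_append]; ring

lemma length_splice : (W.splice hu X).length = W.length + X.length := by
  conv_rhs => rw [← W.take_spec hu]
  simp only [splice, length_append]; ring

lemma mem_support_splice {w : V} (hw : w ∈ W.support ∨ w ∈ X.support) :
    w ∈ (W.splice hu X).support := by
  rw [← W.take_spec hu, mem_support_append_iff] at hw
  simp only [splice, mem_support_append_iff]
  tauto

end SimpleGraph.Walk

namespace SimpleGraph

section Distance

variable {G : SimpleGraph V}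

lemma Connected.exists_adj_dist_lt (hconn : G.Connected) {r v : V} (hv : v ≠ r) :
    ∃ u, G.Adj v u ∧ G.dist r u < G.dist r v := by
  obtain ⟨W, hW⟩ := hconn.exists_walk_length_eq_dist v r
  cases W with
  | nil => exact absurd rfl hv
  | @cons _ u _ h q =>
    refine ⟨u, h, ?_⟩
    have hqr := dist_le q
    rw [Walk.length_cons] at hW
    rw [dist_comm, G.dist_comm (u := r)]
    omega

lemma Connected.adj_iff_ne_of_card_eq_two [Fintype V] (hconn : G.Connected)
    (hV : Fintype.card V = 2) {u v : V} : G.Adj u v ↔ u ≠ v := by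
  classical
  refine ⟨Adj.ne, fun huv => ?_⟩
  obtain ⟨W⟩ := hconn.preconnected u v
  cases W with
  | nil => exact absurd rfl huv
  | @cons _ w _ h q =>
    by_contra hne
    have hwv : w ≠ v := fun e => hne (e ▸ h)
    have h3 : #({u, v, w} : Finset V) = 3 :=
      Finset.card_eq_three.mpr ⟨u, v, w, huv, h.ne, hwv.symm, rfl⟩
    have := Finset.card_le_univ ({u, v, w} : Finset V)
    omega

lemma Connected.nonempty_iso_top_of_card_eq_two [Fintype V] (hconn : G.Connected)
    (hV : Fintype.card V = 2) : Nonempty (G ≃g (⊤ : SimpleGraph (Fin 2))) := by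
  have hG : G = ⊤ := by
    ext u v
    simpa using hconn.adj_iff_ne_of_card_eq_two hV
  subst hG
  exact ⟨Iso.completeGraph (Fintype.equivFinOfCardEq hV)⟩

end Distance

section TreeWalk

variable [DecidableEq V]

/-- `inc_W` of a closed walk which, for every `v ∈ S`, goes back and forth `c v` times along
the edge from `v` to its parent `p v`. -/
def treeInc (p : V → V) (c : V → ℕ) (S : Finset V) (u : V) : ℕ :=
  2 * ((if u ∈ S then c u else 0) + ∑ v ∈ S with p v = u, c v)

variable {G : SimpleGraph V} {p : V → V} {c : V → ℕ} {S : Finset V} {a : V}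

lemma treeInc_insert (ha : a ∉ S) (u : V) :
    treeInc p c (insert a S) u =
      treeInc p c S u + (if u = a then 2 * c a else 0) + (if p a = u then 2 * c a else 0) := by
  unfold treeInc
  rw [Finset.filter_insert]
  by_cases hu : u = a
  · subst hu
    have : u ∉ {v ∈ S | p v = u} := fun h => ha (Finset.mem_filter.mp h).1
    split_ifs <;> simp_all [Finset.sum_insert] <;> ring
  · split_ifs <;> simp_all [Finset.sum_insert] <;> ring

lemma treeInc_congr {c' : V → ℕ} (h : ∀ v ∈ S, c v = c' v) (u : V) :
    treeInc p c S u = treeInc p c' S u := by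
  unfold treeInc
  congr 2
  · split_ifs with hu
    · exact h u hu
    · rfl
  · exact Finset.sum_congr rfl fun v hv => h v (Finset.mem_filter.mp hv).1

lemma treeInc_update_insert (ha : a ∉ S) (x : ℕ) (u : V) :
    treeInc p (Function.update c a x) (insert a S) u =
      treeInc p c S u + (if u = a then 2 * x else 0) + (if p a = u then 2 * x else 0) := by
  rw [treeInc_insert ha, Function.update_self,
    treeInc_congr fun v hv => Function.update_of_ne (ne_of_mem_of_not_mem hv ha) x c]

lemma sum_update_insert (ha : a ∉ S) (x : ℕ) :
    ∑ v ∈ insert a S, Function.update c a x v = x + ∑ v ∈ S, c v := by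
  rw [Finset.sum_insert ha, Function.update_self]
  congr 1
  exact Finset.sum_congr rfl fun v hv => Function.update_of_ne (ne_of_mem_of_not_mem hv ha) x c

lemma exists_walk_inc_eq_treeInc (h : V → ℕ) (r : V) (S : Finset V)
    (hadj : ∀ v ∈ S, G.Adj v (p v)) (hh : ∀ v ∈ S, h (p v) < h v)
    (hpS : ∀ v ∈ S, p v ∈ insert r S) (hc : ∀ v ∈ S, 0 < c v) :
    ∃ W : G.Walk r r, (∀ u ∈ insert r S, u ∈ W.support) ∧
      (∀ u, W.inc u = treeInc p c S u) ∧ W.length = 2 * ∑ v ∈ S, c v := by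
  induction S using Finset.induction_on_max_value h with
  | empty => exact ⟨.nil, by simp, fun u => by simp [treeInc], by simp⟩
  | insert a S ha hmax ih =>
    have hpS' : ∀ v ∈ S, p v ∈ insert r S := fun v hv => by
      have hne : p v ≠ a := fun e =>
        absurd (hmax v hv) (not_le.mpr (e ▸ hh v (Finset.mem_insert_of_mem hv)))
      simpa [hne] using hpS v (Finset.mem_insert_of_mem hv)
    obtain ⟨W, hsupp, hinc, hlen⟩ := ih (fun v hv => hadj v (Finset.mem_insert_of_mem hv))
      (fun v hv => hh v (Finset.mem_insert_of_mem hv)) hpS'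
      (fun v hv => hc v (Finset.mem_insert_of_mem hv))
    have haS := Finset.mem_insert_self a S
    have hpa : p a ∈ insert r S := by
      simpa [(hadj a haS).ne'] using hpS a haS
    let X := Walk.bounce (hadj a haS).symm (c a)
    refine ⟨W.splice (hsupp _ hpa) X, fun u hu => ?_, fun u => ?_, ?_⟩
    · apply Walk.mem_support_splice
      rcases Finset.mem_insert.mp hu with rfl | hu
      · exact Or.inl (hsupp u (Finset.mem_insert_self u S))
      rcases Finset.mem_insert.mp hu with rfl | hu
      · exact Or.inr (Walk.mem_support_bounce _ (hc u haS))
      · exact Or.inl (hsupp u (Finset.mem_insert_of_mem hu))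
    · rw [Walk.inc_splice, hinc, Walk.inc_bounce, treeInc_insert ha]
      simp only [eq_comm (a := u)]
      ring
    · rw [Walk.length_splice, hlen, Walk.length_bounce, Finset.sum_insert ha]
      ring

end TreeWalk

section Greedy

variable [Fintype V] [DecidableEq V] (G : SimpleGraph V) [DecidableRel G.Adj]

lemma card_edgeFinset_inter_sym2_insert {a : V} {S : Finset V} (ha : a ∉ S) :
    #(G.edgeFinset ∩ (insert a S).sym2) =
      #(G.edgeFinset ∩ S.sym2) + #(G.neighborFinset a ∩ S) := by
  have himage : G.edgeFinset ∩ (insert a S).image (fun b => s(a, b)) =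
      (G.neighborFinset a ∩ S).image (fun b => s(a, b)) := by
    ext e
    simp only [Finset.mem_inter, Finset.mem_image, mem_neighborFinset, Finset.mem_insert]
    constructor
    · rintro ⟨he, b, hb, rfl⟩
      have hab : G.Adj a b := by simpa using he
      exact ⟨b, ⟨hab, hb.resolve_left hab.ne'⟩, rfl⟩
    · rintro ⟨b, ⟨hab, hb⟩, rfl⟩
      exact ⟨by simpa using hab, b, Or.inr hb, rfl⟩
  have hdisj : Disjoint (G.edgeFinset ∩ (insert a S).image (fun b => s(a, b)))
      (G.edgeFinset ∩ S.sym2) := by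
    rw [himage, Finset.disjoint_left]
    intro e he he'
    obtain ⟨b, -, rfl⟩ := Finset.mem_image.mp he
    exact ha (Finset.mk_mem_sym2_iff.mp (Finset.mem_inter.mp he').2).1
  rw [Finset.sym2_insert, Finset.inter_union_distrib_left, Finset.card_union_of_disjoint hdisj,
    himage, Finset.card_image_of_injective _ (fun b b' h => Sym2.congr_right.mp h), add_comm]

def treeDeg (p : V → V) (c : V → ℕ) (S : Finset V) (u : V) : ℕ :=
  G.degree u + treeInc p c S u

def IrregularOn (p : V → V) (c : V → ℕ) (S T : Finset V) : Prop :=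
  ∀ ⦃u w⦄, u ∈ T → w ∈ T → G.Adj u w → G.treeDeg p c S u ≠ G.treeDeg p c S w

variable {G} {p : V → V} {c : V → ℕ} {S T : Finset V} {a r : V}

lemma treeDeg_update_insert (ha : a ∉ S) (x : ℕ) (u : V) :
    G.treeDeg p (Function.update c a x) (insert a S) u =
      G.treeDeg p c S u + (if u = a then 2 * x else 0) + (if p a = u then 2 * x else 0) := by
  simp only [treeDeg, treeInc_update_insert ha]
  ring

lemma IrregularOn.insert_of_forall_ne (hirr : G.IrregularOn p c S T)
    (hr : ∀ w ∈ T, G.Adj r w → G.treeDeg p c S r ≠ G.treeDeg p c S w) :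
    G.IrregularOn p c S (insert r T) := by
  intro u w hu hw huw
  rcases Finset.mem_insert.mp hu with rfl | hu' <;>
    rcases Finset.mem_insert.mp hw with rfl | hw'
  · exact absurd huw (G.loopless.irrefl _)
  · exact hr w hw' huw
  · exact (hr u hu' huw.symm).symm
  · exact hirr hu' hw' huw

/-- Only the values at `a` and `p a` change, and neither lies in `S`. -/
lemma IrregularOn.exists_update_insert (hirr : G.IrregularOn p c S S) (ha : a ∉ S)
    (hpa : p a ∉ S) (hpa' : p a ≠ a) (X : Finset ℕ) :
    ∃ x, 0 < x ∧ x ≤ #(G.neighborFinset a ∩ S) + #X + 1 ∧ x ∉ X ∧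
      G.IrregularOn p (Function.update c a x) (insert a S) (insert a S) := by
  set val := G.treeDeg p c S
  set T := (G.neighborFinset a ∩ S).image val
  obtain ⟨x, hx0, hxY, hxX⟩ :=
    Nat.exists_pos_le_card_succ_notMem (T.image (fun y => (y - val a) / 2) ∪ X)
  have hcard : #(T.image (fun y => (y - val a) / 2) ∪ X) ≤ #(G.neighborFinset a ∩ S) + #X :=
    (Finset.card_union_le _ _).trans
      (Nat.add_le_add_right (Finset.card_image_le.trans Finset.card_image_le) _)
  have hold : ∀ u ∈ S, G.treeDeg p (Function.update c a x) (insert a S) u = val u :=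
    fun u hu => by
      simp [treeDeg_update_insert ha, ne_of_mem_of_not_mem hu ha,
        (ne_of_mem_of_not_mem hu hpa).symm, val]
  have hnew : G.treeDeg p (Function.update c a x) (insert a S) a = val a + 2 * x := by
    simp [treeDeg_update_insert ha, hpa', val]
  refine ⟨x, hx0, by omega, fun hm => hxX (Finset.mem_union_right _ hm), ?_⟩
  refine IrregularOn.insert_of_forall_ne (fun u w hu hw huw => ?_) (fun w hw haw => ?_)
  · rw [hold u hu, hold w hw]
    exact hirr hu hw huw
  · rw [hnew, hold w hw]
    refine fun heq =>
      Nat.add_two_mul_notMem_of_notMem_image (fun hm => hxX (Finset.mem_union_left _ hm)) ?_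
    exact heq ▸ Finset.mem_image_of_mem val
      (Finset.mem_inter.mpr ⟨(G.mem_neighborFinset a w).mpr haw, hw⟩)

lemma exists_irregularOn (h : V → ℕ) (S : Finset V) (hh : ∀ v ∈ S, h (p v) < h v) :
    ∃ c : V → ℕ, (∀ v ∈ S, 0 < c v) ∧ G.IrregularOn p c S S ∧
      ∑ v ∈ S, c v ≤ #S + #(G.edgeFinset ∩ S.sym2) := by
  induction S using Finset.induction_on_min_value h with
  | empty => exact ⟨0, by simp, by simp [IrregularOn], by simp⟩
  | insert a S ha hmin ih =>
    obtain ⟨c, hc, hirr, hsum⟩ := ih fun v hv => hh v (Finset.mem_insert_of_mem hv)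
    have hpa := hh a (Finset.mem_insert_self a S)
    obtain ⟨x, hx0, hx, -, hirr'⟩ := hirr.exists_update_insert ha
      (fun hmem => (hmin _ hmem).not_gt hpa) (fun e => (e ▸ hpa).false) ∅
    refine ⟨Function.update c a x, fun v hv => ?_, hirr', ?_⟩
    · rcases eq_or_ne v a with rfl | hva
      · simpa using hx0
      · simpa [hva] using hc v ((Finset.mem_insert.mp hv).resolve_left hva)
    · rw [sum_update_insert ha, Finset.card_insert_of_notMem ha,
        card_edgeFinset_inter_sym2_insert G ha]
      simp only [Finset.card_empty] at hx
      omega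

lemma IrregularOn.exists_update_insert_of_parent_eq (hirr : G.IrregularOn p c S S) (ha : a ∉ S)
    (hr : r ∉ S) (hpa : p a = r) (har : a ≠ r) (hD : G.treeDeg p c S a ≠ G.treeDeg p c S r) :
    ∃ x, 0 < x ∧ x ≤ #(G.neighborFinset a ∩ S) + #(G.neighborFinset r ∩ S) + 1 ∧
      G.IrregularOn p (Function.update c a x) (insert a S) (insert r (insert a S)) := by
  set X := ((G.neighborFinset r ∩ S).image (G.treeDeg p c S)).image
    fun y => (y - G.treeDeg p c S r) / 2
  obtain ⟨x, hx0, hx, hxX, hirr'⟩ := hirr.exists_update_insert ha (hpa ▸ hr) (hpa ▸ har.symm) X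
  have hcard : #X ≤ #(G.neighborFinset r ∩ S) := Finset.card_image_le.trans Finset.card_image_le
  refine ⟨x, hx0, by omega, hirr'.insert_of_forall_ne fun w hw hrw => ?_⟩
  rcases Finset.mem_insert.mp hw with rfl | hw'
  · simp only [treeDeg_update_insert ha, hpa, if_neg har.symm]
    omega
  · have hwa : w ≠ a := ne_of_mem_of_not_mem hw' ha
    have hwr : r ≠ w := (ne_of_mem_of_not_mem hw' hr).symm
    simp only [treeDeg_update_insert ha, hpa, if_neg har.symm, if_neg hwa, if_neg hwr, add_zero]
    refine fun heq => Nat.add_two_mul_notMem_of_notMem_image hxX ?_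
    exact heq ▸ Finset.mem_image_of_mem (G.treeDeg p c S)
      (Finset.mem_inter.mpr ⟨(G.mem_neighborFinset r w).mpr hrw, hw'⟩)

lemma IrregularOn.exists_update_insert_of_parent_mem_pair {b : V}
    (hirr : G.IrregularOn p c S S) (hb : b ∉ S) (ha : a ∉ S) (hr : r ∉ S) (hab : b ≠ a)
    (hbr : b ≠ r) (har : a ≠ r) (hpb : p b = a ∨ p b = r) :
    ∃ x, 0 < x ∧ x ≤ #(G.neighborFinset b ∩ S) + 2 ∧
      G.IrregularOn p (Function.update c b x) (insert b S) (insert b S) ∧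
      G.treeDeg p (Function.update c b x) (insert b S) a ≠
        G.treeDeg p (Function.update c b x) (insert b S) r := by
  -- The forbidden value is `|treeDeg r - treeDeg a| / 2`, the only `x` for which adding `2 * x`
  -- to the value at `p b` (one of `a`, `r`) makes the two values equal.
  obtain ⟨x, hx0, hx, hxX, hirr'⟩ := hirr.exists_update_insert hb
    (by rcases hpb with h | h <;> rwa [h]) (by rcases hpb with h | h <;> rw [h] <;> tauto)
    {(G.treeDeg p c S r - G.treeDeg p c S a + (G.treeDeg p c S a - G.treeDeg p c S r)) / 2}
  refine ⟨x, hx0, by simpa using hx, hirr', ?_⟩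
  rw [Finset.mem_singleton] at hxX
  simp only [treeDeg_update_insert hb, if_neg hab.symm, if_neg hbr.symm]
  rcases hpb with h | h <;> simp only [h, if_true, if_neg har, if_neg har.symm] <;> omega

lemma exists_child_and_child_or_grandchild (h : V → ℕ) (hh : ∀ v ≠ r, h (p v) < h v)
    (hV : 3 ≤ Fintype.card V) :
    ∃ a b, a ≠ r ∧ b ≠ r ∧ b ≠ a ∧ p a = r ∧ (p b = a ∨ p b = r) := by
  have hcard : 1 < #(Finset.univ.erase r) := by
    rw [Finset.card_erase_of_mem (Finset.mem_univ r), Finset.card_univ]; omega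
  obtain ⟨a, haS, ha⟩ := (Finset.univ.erase r).exists_min_image h
    (Finset.card_pos.mp (by omega : 0 < #(Finset.univ.erase r)))
  obtain ⟨b, hbS, hb⟩ := ((Finset.univ.erase r).erase a).exists_min_image h
    (Finset.card_pos.mp (by rw [Finset.card_erase_of_mem haS]; omega))
  have har : a ≠ r := Finset.ne_of_mem_erase haS
  have hbr : b ≠ r := Finset.ne_of_mem_erase (Finset.mem_of_mem_erase hbS)
  refine ⟨a, b, har, hbr, Finset.ne_of_mem_erase hbS, ?_, ?_⟩
  · by_contra hne
    exact (ha _ (Finset.mem_erase.mpr ⟨hne, Finset.mem_univ _⟩)).not_gt (hh a har)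
  · by_contra! hne
    exact (hb _ (by simp [hne.1, hne.2])).not_gt (hh b hbr)

lemma exists_irregularOn_univ (h : V → ℕ) (hh : ∀ v ≠ r, h (p v) < h v)
    (hadj : ∀ v ≠ r, G.Adj v (p v)) (hV : 3 ≤ Fintype.card V) :
    ∃ c : V → ℕ, (∀ v ∈ Finset.univ.erase r, 0 < c v) ∧
      G.IrregularOn p c (Finset.univ.erase r) Finset.univ ∧
      ∑ v ∈ Finset.univ.erase r, c v ≤ Fintype.card V - 1 + #G.edgeFinset := by
  obtain ⟨a, b, har, hbr, hba, hpa, hpb⟩ := exists_child_and_child_or_grandchild h hh hV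
  set S₀ := ((Finset.univ.erase r).erase a).erase b
  have haS : a ∈ Finset.univ.erase r := by simp [har]
  have hbS : b ∈ (Finset.univ.erase r).erase a := by simp [hba, hbr]
  have hS₀ : ∀ v ∈ S₀, v ≠ r := fun v hv => by simp_all [S₀]
  obtain ⟨c₀, hc₀, hirr₀, hsum₀⟩ := exists_irregularOn (G := G) h S₀ fun v hv => hh v (hS₀ v hv)
  obtain ⟨x, hx0, hx, hirr₁, hD⟩ := hirr₀.exists_update_insert_of_parent_mem_pair
    (by simp [S₀]) (by simp [S₀]) (by simp [S₀]) hba hbr har hpb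
  obtain ⟨y, hy0, hy, hirr₂⟩ := hirr₁.exists_update_insert_of_parent_eq
    (by simp [S₀, hba.symm]) (by simp [S₀, hbr.symm]) hpa har hD
  have hS₂ : insert a (insert b S₀) = Finset.univ.erase r := by
    rw [Finset.insert_erase hbS, Finset.insert_erase haS]
  rw [hS₂, Finset.insert_erase (Finset.mem_univ r)] at hirr₂
  refine ⟨_, fun v hv => ?_, hirr₂, ?_⟩
  · by_cases hva : v = a
    · simpa [hva] using hy0
    by_cases hvb : v = b
    · simpa [hvb, hba] using hx0
    simpa [hva, hvb] using hc₀ v (by simp_all [S₀])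
  · have haS₁ : a ∉ insert b S₀ := by simp [S₀, hba.symm]
    have hbS₀ : b ∉ S₀ := by simp [S₀]
    have hrN : #(G.neighborFinset r ∩ insert a (insert b S₀)) =
        #(G.neighborFinset r ∩ insert b S₀) + 1 := by
      rw [Finset.inter_insert_of_mem (by simpa [hpa] using (hadj a har).symm),
        Finset.card_insert_of_notMem (fun h => haS₁ (Finset.mem_inter.mp h).2)]
    have hm : #G.edgeFinset = #(G.edgeFinset ∩ (insert r (Finset.univ.erase r)).sym2) := by
      rw [Finset.insert_erase (Finset.mem_univ r), Finset.sym2_univ, Finset.inter_univ]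
    have hS₀card : #S₀ + 3 = Fintype.card V := by
      rw [Finset.card_erase_of_mem hbS, Finset.card_erase_of_mem haS,
        Finset.card_erase_of_mem (Finset.mem_univ r), Finset.card_univ]
      omega
    rw [hm, card_edgeFinset_inter_sym2_insert G (Finset.notMem_erase r _), ← hS₂,
      card_edgeFinset_inter_sym2_insert G haS₁, card_edgeFinset_inter_sym2_insert G hbS₀,
      hrN, sum_update_insert haS₁, sum_update_insert hbS₀]
    omega

end Greedy

section

variable [Fintype V] [DecidableEq V] {G : SimpleGraph V} [DecidableRel G.Adj]

lemma Walk.irregularising_of_subsingleton [Subsingleton V] {a b : V} (W : G.Walk a b) :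
    W.Irregularising :=
  fun u v huv => absurd (Subsingleton.elim u v ▸ huv) (G.loopless.irrefl v)

lemma MLW_le_length {a b : V} {W : G.Walk a b} (hW : W.Irregularising) :
    MLW G ≤ W.length :=
  iInf_le_of_le a (iInf_le_of_le b (iInf_le_of_le W (iInf_le _ hW)))

lemma Connected.exists_irregularising_walk_of_three_le_card (hconn : G.Connected)
    (hV : 3 ≤ Fintype.card V) :
    ∃ (r : V) (W : G.Walk r r), W.Irregularising ∧
      W.length ≤ 2 * (#G.edgeFinset + Fintype.card V - 1) := by
  obtain ⟨r⟩ := hconn.nonempty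
  choose! p hpadj hpdist using fun v (hv : v ≠ r) => hconn.exists_adj_dist_lt hv
  obtain ⟨c, hc, hirr, hsum⟩ := exists_irregularOn_univ (G := G) (G.dist r) hpdist hpadj hV
  obtain ⟨W, -, hinc, hlen⟩ := exists_walk_inc_eq_treeInc (G := G) (G.dist r) r _
    (fun v hv => hpadj v (Finset.ne_of_mem_erase hv))
    (fun v hv => hpdist v (Finset.ne_of_mem_erase hv)) (by simp) hc
  refine ⟨r, W, fun u w huw => ?_, by omega⟩
  rw [hinc, hinc]
  exact hirr (Finset.mem_univ u) (Finset.mem_univ w) huw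

end

end SimpleGraph

/-- Every connected graph `G` not isomorphic to `K₂`, with `n` vertices and
`m` edges, admits an irregularising walk of length at most `2(m + n - 1)`; in particular
`ML^W(G) ≤ 4m`. -/
theorem stmt_5 {V : Type*} [Fintype V] [DecidableEq V] (G : SimpleGraph V)
    [DecidableRel G.Adj] (hconn : G.Connected)
    (hK2 : ¬ Nonempty (G ≃g (⊤ : SimpleGraph (Fin 2)))) :
    (∃ (a b : V) (W : G.Walk a b), W.Irregularising ∧
        W.length ≤ 2 * (G.edgeFinset.card + Fintype.card V - 1)) ∧
      MLW G ≤ (4 * G.edgeFinset.card : ℕ) := by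
  obtain ⟨r, W, hW, hlen⟩ : ∃ (r : V) (W : G.Walk r r), W.Irregularising ∧
      W.length ≤ 2 * (#G.edgeFinset + Fintype.card V - 1) := by
    obtain ⟨r⟩ := hconn.nonempty
    rcases Nat.lt_or_ge (Fintype.card V) 3 with hV | hV
    · have hV1 : Fintype.card V ≤ 1 := by
        have : Fintype.card V ≠ 2 := fun h => hK2 (hconn.nonempty_iso_top_of_card_eq_two h)
        omega
      have := Fintype.card_le_one_iff_subsingleton.mp hV1
      exact ⟨r, .nil, Walk.irregularising_of_subsingleton _, by simp⟩
    · exact hconn.exists_irregularising_walk_of_three_le_card hV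
  refine ⟨⟨r, r, W, hW, hlen⟩, (MLW_le_length hW).trans (Nat.cast_le.mpr ?_)⟩
  have hm := hconn.card_vert_le_card_edgeSet_add_one
  rw [Nat.card_eq_fintype_card, Nat.card_eq_fintype_card, ← edgeFinset_card] at hm
  omega
end

section
/- Let G be a nice graph with maximum degree Δ. Then χ'_s(G) ≤ ME^W(G) + 1 and ME^W(G) + 1 ≤ 3(1 + Δ·χ'_s(G)). -/
open SimpleGraph Finset

variable {V : Type*}

/-!
A walk `W` yields the labelling `e ↦ 1 + (number of traversals of e)`, whose vertex sums are
`d(u) + inc_W(u)`; an irregularising walk therefore gives a proper labelling, and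
`χ'_s ≤ ME^W + 1`. Conversely, every assignment of positive even multiplicities to the edges of a
connected graph is realised by a closed walk (remove a vertex `v` keeping the graph connected, and
splice into the walk of the rest a closed walk bouncing along the edges at `v`). Realising
`2Δ·ℓ(e)` for a proper labelling `ℓ` gives `d(u) + inc_W(u) = d(u) + 2Δ·σ_ℓ(u)` with `d(u) < 2Δ`,
so the walk is irregularising and traverses no edge more than `2Δ·χ'_s` times.
-/

namespace SimpleGraph

variable {G : SimpleGraph V}

theorem Adj.exists_walk_edges_eq_replicate {u v : V} (h : G.Adj u v) (k : ℕ) :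
    ∃ W : G.Walk u u, W.edges = List.replicate (2 * k) s(u, v) := by
  induction k with
  | zero => exact ⟨.nil, rfl⟩
  | succ k ih =>
    obtain ⟨W, hW⟩ := ih
    refine ⟨.cons h (.cons h.symm W), ?_⟩
    simp [hW, Sym2.eq_swap, mul_add, List.replicate_succ]

theorem exists_walk_count_edges_eq_sum [DecidableEq V] (v : V) (S : Finset V)
    (hS : ∀ w ∈ S, G.Adj v w) (k : V → ℕ) :
    ∃ C : G.Walk v v, ∀ e, C.edges.count e = ∑ w ∈ S, if s(v, w) = e then 2 * k w else 0 := by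
  induction S using Finset.induction_on with
  | empty => exact ⟨.nil, by simp⟩
  | insert w S hwS ih =>
    obtain ⟨C, hC⟩ := ih fun x hx => hS x (Finset.mem_insert_of_mem hx)
    obtain ⟨B, hB⟩ := (hS w (Finset.mem_insert_self w S)).exists_walk_edges_eq_replicate (k w)
    refine ⟨B.append C, fun e => ?_⟩
    rw [Walk.edges_append, List.count_append, hB, hC, List.count_replicate,
      Finset.sum_insert hwS]
    simp

theorem exists_walk_count_edges_eq_ite [Finite V] [DecidableEq V] (v : V) (c : Sym2 V → ℕ)
    (hc : ∀ w, G.Adj v w → Even (c s(v, w))) :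
    ∃ C : G.Walk v v, ∀ e ∈ G.edgeSet, C.edges.count e = if v ∈ e then c e else 0 := by
  obtain ⟨C, hC⟩ := exists_walk_count_edges_eq_sum v (G.neighborSet v).toFinite.toFinset
    (fun w hw => by simpa using hw) (fun w => c s(v, w) / 2)
  refine ⟨C, fun e he => ?_⟩
  split_ifs with hve
  · obtain ⟨w, rfl⟩ := Sym2.mem_iff_exists.mp hve
    simp only [hC, Sym2.congr_right, Finset.sum_ite_eq']
    rw [if_pos (by simpa using he)]
    exact Nat.two_mul_div_two_of_even (hc w he)
  · have hne : ∀ w, s(v, w) ≠ e := fun w h => hve (h ▸ Sym2.mem_mk_left v w)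
    simp only [hC, hne, if_false, Finset.sum_const_zero]

theorem Walk.exists_edges_perm_append [DecidableEq V] {a b x y : V} (W : G.Walk a b)
    (C : G.Walk y y) (hW : x ∈ W.support) (hC : x ∈ C.support) :
    ∃ W' : G.Walk a b, W'.edges.Perm (W.edges ++ C.edges) := by
  refine ⟨(W.takeUntil x hW).append ((C.rotate x hC).append (W.dropUntil x hW)), ?_⟩
  conv_rhs => rw [← W.take_spec hW]
  simp only [Walk.edges_append, List.append_assoc]
  exact (List.perm_append_comm.append_left _).trans
    ((((C.rotate_edges x hC).perm).append_left _).append_left _)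

theorem Walk.count_edges_map_induce [DecidableEq V] {s : Set V} {a b : s}
    (W : (G.induce s).Walk a b) {x y : V} (hx : x ∈ s) (hy : y ∈ s) :
    (W.map (Embedding.induce s).toHom).edges.count s(x, y) = W.edges.count s(⟨x, hx⟩, ⟨y, hy⟩) := by
  rw [Walk.edges_map]
  exact List.count_map_of_injective W.edges (Sym2.map (Embedding.induce (G := G) s).toHom)
    (Sym2.map.injective Subtype.val_injective) s(⟨x, hx⟩, ⟨y, hy⟩)

theorem Walk.count_edges_map_induce_eq_zero [DecidableEq V] {s : Set V} {a b : s}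
    (W : (G.induce s).Walk a b) {e : Sym2 V} {x : V} (hx : x ∉ s) (hxe : x ∈ e) :
    (W.map (Embedding.induce s).toHom).edges.count e = 0 := by
  refine List.count_eq_zero.mpr fun he => ?_
  rw [Walk.edges_map] at he
  obtain ⟨e', -, rfl⟩ := List.mem_map.mp he
  obtain ⟨y, -, rfl⟩ := Sym2.mem_map.mp hxe
  exact hx y.2

theorem exists_walk_count_edges_eq_of_induce_compl_singleton [DecidableEq V] [Finite V]
    [Nontrivial V] (hG : G.Connected) {v : V} (hv : (G.induce {v}ᶜ).Connected)
    (c : Sym2 V → ℕ) (hc : ∀ e ∈ G.edgeSet, c e ≠ 0 ∧ Even (c e))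
    (hind : ∃ (r : ({v}ᶜ : Set V)) (W : (G.induce {v}ᶜ).Walk r r),
      ∀ e ∈ (G.induce {v}ᶜ).edgeSet, W.edges.count e = c (e.map Subtype.val)) :
    ∃ (r : V) (W : G.Walk r r), ∀ e ∈ G.edgeSet, W.edges.count e = c e := by
  obtain ⟨r', W', hW'⟩ := hind
  obtain ⟨u, hvu⟩ := hG.preconnected.exists_adj_of_nontrivial v
  have hu : u ∈ ({v}ᶜ : Set V) := hvu.ne'
  have huW' : ⟨u, hu⟩ ∈ W'.support := by
    rcases subsingleton_or_nontrivial ({v}ᶜ : Set V) with _ | _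
    · rw [Subsingleton.elim ⟨u, hu⟩ r']
      exact W'.start_mem_support
    · obtain ⟨y, hy⟩ := hv.preconnected.exists_adj_of_nontrivial ⟨u, hu⟩
      have hpos : 0 < W'.edges.count s(⟨u, hu⟩, y) := by
        rw [hW' _ hy]
        exact Nat.pos_of_ne_zero (hc _ hy).1
      exact W'.fst_mem_support_of_mem_edges (List.count_pos_iff.mp hpos)
  set W₀ := W'.map (Embedding.induce {v}ᶜ).toHom
  have hW₀ : ∀ e ∈ G.edgeSet, W₀.edges.count e = if v ∈ e then 0 else c e := by
    intro e he
    split_ifs with hve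
    · exact W'.count_edges_map_induce_eq_zero (fun h => h rfl) hve
    · induction e using Sym2.ind with | _ x y
      have hx : x ∈ ({v}ᶜ : Set V) := fun h => hve (h ▸ Sym2.mem_mk_left x y)
      have hy : y ∈ ({v}ᶜ : Set V) := fun h => hve (h ▸ Sym2.mem_mk_right x y)
      exact (W'.count_edges_map_induce hx hy).trans (hW' _ he)
  obtain ⟨C, hC⟩ := exists_walk_count_edges_eq_ite v c fun w hw => (hc s(v, w) hw).2
  have huC : u ∈ C.support := by
    have hpos : 0 < C.edges.count s(v, u) := by
      rw [hC _ hvu, if_pos (Sym2.mem_mk_left v u)]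
      exact Nat.pos_of_ne_zero (hc s(v, u) hvu).1
    exact C.snd_mem_support_of_mem_edges (List.count_pos_iff.mp hpos)
  have huW₀ : u ∈ W₀.support := by
    rw [Walk.support_map]
    exact List.mem_map_of_mem huW'
  obtain ⟨W, hW⟩ := W₀.exists_edges_perm_append C huW₀ huC
  refine ⟨_, W, fun e he => ?_⟩
  rw [hW.count_eq, List.count_append, hW₀ e he, hC e he]
  split_ifs <;> simp only [zero_add, add_zero]

theorem Connected.exists_walk_count_edges_eq [Finite V] [DecidableEq V]
    (hG : G.Connected) (c : Sym2 V → ℕ) (hc : ∀ e ∈ G.edgeSet, c e ≠ 0 ∧ Even (c e)) :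
    ∃ (r : V) (W : G.Walk r r), ∀ e ∈ G.edgeSet, W.edges.count e = c e := by
  refine Finite.induction_subsingleton_or_nontrivial (P := fun V => ∀ [DecidableEq V]
    (G : SimpleGraph V), G.Connected → ∀ c : Sym2 V → ℕ, (∀ e ∈ G.edgeSet, c e ≠ 0 ∧ Even (c e)) →
      ∃ (r : V) (W : G.Walk r r), ∀ e ∈ G.edgeSet, W.edges.count e = c e) V ?_ ?_ G hG c hc
  · intro V _ _ _ G hG c _
    obtain ⟨r⟩ := hG.nonempty
    refine ⟨r, .nil, fun e he => ?_⟩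
    induction e using Sym2.ind with
    | _ x y => exact absurd (Subsingleton.elim x y) (G.ne_of_adj he)
  · intro V _ _ ih _ G hG c hc
    obtain ⟨v, hv⟩ := hG.exists_connected_induce_compl_singleton_of_finite_nontrivial
    refine exists_walk_count_edges_eq_of_induce_compl_singleton hG hv c hc ?_
    exact ih _ (Finite.card_subtype_lt (x := v) (by simp)) _ hv _
      fun e he => hc _ (by induction e using Sym2.ind; exact he)

theorem Walk.count_le_sup_count [DecidableEq V] {a b : V} (W : G.Walk a b) (e : Sym2 V) :
    W.edges.count e ≤ W.edges.toFinset.sup fun e => W.edges.count e := by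
  by_cases he : e ∈ W.edges
  · exact Finset.le_sup (f := fun e => W.edges.count e) (List.mem_toFinset.mpr he)
  · rw [List.count_eq_zero.mpr he]
    exact Nat.zero_le _

theorem Adj.maxDegree_pos [Fintype V] [DecidableRel G.Adj] {u v : V} (h : G.Adj u v) :
    0 < G.maxDegree :=
  ((G.degree_pos_iff_exists_adj u).mpr ⟨v, h⟩).trans_le (G.degree_le_maxDegree u)

section Labelling

variable [Fintype V] [DecidableEq V] [DecidableRel G.Adj]

theorem Walk.inc_eq_sum_count_s7 {a b : V} (W : G.Walk a b) (u : V) :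
    W.inc u = ∑ w ∈ G.neighborFinset u, W.edges.count s(u, w) := by
  have hsub : ∀ e ∈ (W.edges.filter (u ∈ ·) : Multiset (Sym2 V)),
      e ∈ (G.neighborFinset u).image (s(u, ·)) := by
    intro e he
    obtain ⟨he, hue⟩ := List.mem_filter.mp he
    obtain ⟨w, rfl⟩ := Sym2.mem_iff_exists.mp (of_decide_eq_true hue)
    exact Finset.mem_image_of_mem _ ((G.mem_neighborFinset u w).mpr (W.edges_subset_edgeSet he))
  rw [Walk.inc, ← Multiset.coe_card, ← Multiset.sum_count_eq_card hsub,
    Finset.sum_image fun _ _ _ _ h => Sym2.congr_right.mp h]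
  refine Finset.sum_congr rfl fun w _ => ?_
  rw [Multiset.coe_count, List.count_filter (by simp)]

theorem Walk.vertexSum_count_add_one {a b : V} (W : G.Walk a b) (u : V) :
    vertexSum G (fun e => W.edges.count e + 1) u = G.degree u + W.inc u := by
  rw [vertexSum, Finset.sum_add_distrib, ← W.inc_eq_sum_count_s7, Finset.sum_const, smul_eq_mul,
    mul_one, card_neighborFinset_eq_degree, add_comm]

theorem Walk.Irregularising.isProperLabelling {a b : V} {W : G.Walk a b}
    (hW : W.Irregularising) : IsProperLabelling G (fun e => W.edges.count e + 1) :=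
  fun u v huv => by simpa only [W.vertexSum_count_add_one] using hW huv

theorem IsProperLabelling.irregularising {ℓ : Sym2 V → ℕ} (hℓ : IsProperLabelling G ℓ)
    {a b : V} (W : G.Walk a b) (hW : ∀ e ∈ G.edgeSet, W.edges.count e = 2 * G.maxDegree * ℓ e) :
    W.Irregularising := by
  have hinc : ∀ u, W.inc u = 2 * G.maxDegree * vertexSum G ℓ u := fun u => by
    rw [W.inc_eq_sum_count_s7, vertexSum, Finset.mul_sum]
    exact Finset.sum_congr rfl fun w hw => hW _ ((G.mem_neighborFinset u w).mp hw)
  -- Degrees stay below the modulus `2Δ`, so `σ_ℓ(u)` is the quotient of `d(u) + inc_W(u)` by `2Δ`.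
  have hquot : ∀ u w, G.Adj u w →
      (G.degree u + W.inc u) / (2 * G.maxDegree) = vertexSum G ℓ u := by
    intro u w huw
    have hΔ := huw.maxDegree_pos
    rw [hinc, Nat.add_mul_div_left _ _ (by omega),
      Nat.div_eq_of_lt (by linarith [G.degree_le_maxDegree u]), zero_add]
  intro u w huw heq
  exact hℓ huw (by rw [← hquot u w huw, ← hquot w u huw.symm, heq])

theorem Connected.exists_irregularising_walk (hG : G.Connected) {ℓ : Sym2 V → ℕ}
    (hℓ : IsProperLabelling G ℓ) {k : ℕ} (hk : ∀ e ∈ G.edgeSet, 1 ≤ ℓ e ∧ ℓ e ≤ k) :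
    ∃ (r : V) (W : G.Walk r r),
      W.Irregularising ∧
        (W.edges.toFinset.sup fun e => W.edges.count e) ≤ 2 * G.maxDegree * k := by
  have hc : ∀ e ∈ G.edgeSet, 2 * G.maxDegree * ℓ e ≠ 0 ∧ Even (2 * G.maxDegree * ℓ e) := by
    intro e he
    induction e using Sym2.ind with
    | _ x y => exact ⟨by have := he.maxDegree_pos; have := (hk _ he).1; positivity,
        (even_two_mul _).mul_right _⟩
  obtain ⟨r, W, hW⟩ := hG.exists_walk_count_edges_eq _ hc
  refine ⟨r, W, hℓ.irregularising W hW, Finset.sup_le fun e he => ?_⟩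
  have he' := W.edges_subset_edgeSet (List.mem_toFinset.mp he)
  rw [hW e he']
  exact Nat.mul_le_mul_left _ (hk e he').2

end Labelling

end SimpleGraph

open SimpleGraph

theorem MEW_le_of_irregularising [Fintype V] [DecidableEq V] {G : SimpleGraph V}
    [DecidableRel G.Adj] {a b : V} {W : G.Walk a b} (hW : W.Irregularising) :
    MEW G ≤ ((W.edges.toFinset.sup fun e => W.edges.count e : ℕ) : ℕ∞) :=
  iInf_le_of_le a <| iInf_le_of_le b <| iInf_le_of_le W <| iInf_le _ hW

theorem le_MEW [Fintype V] [DecidableEq V] {G : SimpleGraph V} [DecidableRel G.Adj] {k : ℕ∞}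
    (h : ∀ (a b : V) (W : G.Walk a b), W.Irregularising →
      k ≤ ((W.edges.toFinset.sup fun e => W.edges.count e : ℕ) : ℕ∞)) :
    k ≤ MEW G :=
  le_iInf fun a => le_iInf fun b => le_iInf fun W => le_iInf (h a b W)

theorem stmt_7_general {V : Type*} [Fintype V] [DecidableEq V] (G : SimpleGraph V)
    [DecidableRel G.Adj] (hconn : G.Connected)
    (chi : ℕ)
    (hchi : IsLeast {k : ℕ | 1 ≤ k ∧ ∃ ℓ : Sym2 V → ℕ,
      (∀ e ∈ G.edgeSet, 1 ≤ ℓ e ∧ ℓ e ≤ k) ∧ IsProperLabelling G ℓ} chi) :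
    (chi : ℕ∞) ≤ MEW G + 1 ∧ MEW G + 1 ≤ 3 * (1 + (G.maxDegree : ℕ∞) * (chi : ℕ∞)) := by
  obtain ⟨⟨-, ℓ, hℓ, hproper⟩, hleast⟩ := hchi
  constructor
  · rw [← tsub_le_iff_right]
    refine le_MEW fun a b W hW => tsub_le_iff_right.mpr ?_
    have := hleast ⟨le_add_self, _, fun e _ => ⟨le_add_self,
      Nat.add_le_add_right (W.count_le_sup_count e) 1⟩, hW.isProperLabelling⟩
    exact_mod_cast this
  · obtain ⟨r, W, hW, hsup⟩ := hconn.exists_irregularising_walk hproper hℓ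
    calc MEW G + 1 ≤ ((2 * G.maxDegree * chi : ℕ) : ℕ∞) + 1 :=
          add_le_add_left ((MEW_le_of_irregularising hW).trans (Nat.cast_le.mpr hsup)) 1
      _ ≤ 3 * (1 + G.maxDegree * chi) := by
          norm_cast
          nlinarith

/-- For a nice graph `G` with maximum degree `Δ`,
`χ'_s(G) ≤ ME^W(G) + 1` and `ME^W(G) + 1 ≤ 3(1 + Δ·χ'_s(G))`. -/
theorem stmt_7 {V : Type*} [Fintype V] [DecidableEq V] (G : SimpleGraph V)
    [DecidableRel G.Adj] (hconn : G.Connected)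
    (hK2 : ¬ Nonempty (G ≃g (⊤ : SimpleGraph (Fin 2))))
    (chi : ℕ)
    (hchi : IsLeast {k : ℕ | 1 ≤ k ∧ ∃ ℓ : Sym2 V → ℕ,
      (∀ e ∈ G.edgeSet, 1 ≤ ℓ e ∧ ℓ e ≤ k) ∧ IsProperLabelling G ℓ} chi) :
    (chi : ℕ∞) ≤ MEW G + 1 ∧ MEW G + 1 ≤ 3 * (1 + (G.maxDegree : ℕ∞) * (chi : ℕ∞)) :=
  stmt_7_general G hconn chi hchi
end
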